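/- (Lemma 3.3(ii)) Let a, b, c be real with a·c·(b²−4ac) ≠ 0 and write D = b²−4ac. Define a₁(h) = (4/5)h − (12ac+b²+16ab+16a²)/(15aD), a₂(h) = −b/(9a) − 2/9, a₃(h) = (4(b+2a)/(5D))·h + (b+2a)/(5aD), a₄(h) = (4/3)h + 1/(3a), and G₂(h) = (4/(15a))·(4ah+1)·(h − (a+b+c)/D). Let Σ ⊆ ℝ be an open interval with G₂(h) ≠ 0 for all h ∈ Σ, and let I₁₁, I₁₃ : Σ → ℝ be differentiable functions with I₁₁(h) ≠ 0 on Σ, satisfying the Picard–Fuchs system I₁₁ = ((4/3)h + 1/(3a))·I₁₁' + (b/(9a) + 2/9)·I₁₃' and I₁₃ = (−(4(b+2a)/(5D))·h − (b+2a)/(5aD))·I₁₁' + ((4/5)h − (12ac+b²+16ab+16a²)/(15aD))·I₁₃' on Σ. Then ω₂ := I₁₃/I₁₁ is differentiable on Σ and satisfies the Riccati equation G₂(h)·ω₂'(h) = −a₂(h)·ω₂(h)² + (a₄(h) − a₁(h))·ω₂(h) + a₃(h) for all h ∈ Σ. -/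

import Mathlib

noncomputable def G2 (a b c h : ℝ) : ℝ :=
  (4 / (15 * a)) * (4 * a * h + 1) * (h - (a + b + c) / (b ^ 2 - 4 * a * c))

noncomputable def a1 (a b c h : ℝ) : ℝ :=
  (4 / 5) * h - (12 * a * c + b ^ 2 + 16 * a * b + 16 * a ^ 2) / (15 * a * (b ^ 2 - 4 * a * c))

noncomputable def a2 (a b : ℝ) : ℝ := -(b / (9 * a)) - 2 / 9

noncomputable def a3 (a b c h : ℝ) : ℝ :=
  (4 * (b + 2 * a) / (5 * (b ^ 2 - 4 * a * c))) * h + (b + 2 * a) / (5 * a * (b ^ 2 - 4 * a * c))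

noncomputable def a4 (a h : ℝ) : ℝ := (4 / 3) * h + 1 / (3 * a)

/-!
Write the Picard–Fuchs system as `(I₁₁, I₁₃) = M (I₁₁', I₁₃')` with `M = [[a₄, -a₂], [-a₃, a₁]]`.
Multiplying the quotient rule `ω' = (I₁₃' I₁₁ - I₁₃ I₁₁') / I₁₁²` by `det M` and substituting
`det M · (I₁₁', I₁₃') = adj M · (I₁₁, I₁₃)` turns the numerator into a quadratic form in
`(I₁₁, I₁₃)`; dividing by `I₁₁²` gives the Riccati equation, and `det M = G₂`.
-/

theorem det_mul_quotient_rule_of_linear_system {K : Type*} [Field K] {f g u v α β γ δ : K}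
    (hf : f ≠ 0) (hfuv : f = α * u + β * v) (hguv : g = γ * u + δ * v) :
    (α * δ - β * γ) * ((v * f - g * u) / f ^ 2) =
      β * (g / f) ^ 2 + (α - δ) * (g / f) - γ := by
  have hnum : (α * δ - β * γ) * (v * f - g * u) = β * g ^ 2 + (α - δ) * (g * f) - γ * f ^ 2 := by
    rw [hfuv, hguv]; ring
  field_simp
  linear_combination hnum

theorem G2_eq_a1_mul_a4_sub_a2_mul_a3 {a b c : ℝ} (ha : a ≠ 0) (hD : b ^ 2 - 4 * a * c ≠ 0)
    (h : ℝ) : G2 a b c h = a1 a b c h * a4 a h - a2 a b * a3 a b c h := by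
  simp only [a1, a2, a3, a4, G2]
  field_simp
  ring

theorem stmt17_general (a b c : ℝ) (habc : a * c * (b ^ 2 - 4 * a * c) ≠ 0)
    (S : Set ℝ)
    (I11 I13 : ℝ → ℝ)
    (hI11 : ∀ h ∈ S, DifferentiableAt ℝ I11 h)
    (hI13 : ∀ h ∈ S, DifferentiableAt ℝ I13 h)
    (hne : ∀ h ∈ S, I11 h ≠ 0)
    (hPF1 : ∀ h ∈ S, I11 h = ((4 / 3) * h + 1 / (3 * a)) * deriv I11 h
        + (b / (9 * a) + 2 / 9) * deriv I13 h)
    (hPF2 : ∀ h ∈ S, I13 h =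
        (-(4 * (b + 2 * a) / (5 * (b ^ 2 - 4 * a * c))) * h
            - (b + 2 * a) / (5 * a * (b ^ 2 - 4 * a * c))) * deriv I11 h
        + ((4 / 5) * h
            - (12 * a * c + b ^ 2 + 16 * a * b + 16 * a ^ 2)
              / (15 * a * (b ^ 2 - 4 * a * c))) * deriv I13 h) :
    ∀ ω : ℝ → ℝ, (∀ h : ℝ, ω h = I13 h / I11 h) →
      ∀ h ∈ S, DifferentiableAt ℝ ω h ∧
        G2 a b c h * deriv ω h =
          -(a2 a b) * (ω h) ^ 2 + (a4 a h - a1 a b c h) * ω h + a3 a b c h := by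
  intro ω hω h hS
  have ha : a ≠ 0 := left_ne_zero_of_mul (left_ne_zero_of_mul habc)
  have hD : b ^ 2 - 4 * a * c ≠ 0 := right_ne_zero_of_mul habc
  obtain rfl : ω = fun x => I13 x / I11 x := funext hω
  have hquot := (hI13 h hS).hasDerivAt.fun_div (hI11 h hS).hasDerivAt (hne h hS)
  refine ⟨hquot.differentiableAt, ?_⟩
  have hriccati := det_mul_quotient_rule_of_linear_system (g := I13 h)
    (u := deriv I11 h) (v := deriv I13 h) (α := a4 a h) (β := -a2 a b)
    (γ := -a3 a b c h) (δ := a1 a b c h) (hne h hS)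
    (by rw [hPF1 h hS, a4, a2]; ring) (by rw [hPF2 h hS, a3, a1]; ring)
  rw [hquot.deriv, G2_eq_a1_mul_a4_sub_a2_mul_a3 ha hD]
  linear_combination hriccati

theorem stmt17 (a b c : ℝ) (habc : a * c * (b ^ 2 - 4 * a * c) ≠ 0)
    (S : Set ℝ) (hSo : IsOpen S) (hSc : Convex ℝ S)
    (hG : ∀ h ∈ S, G2 a b c h ≠ 0)
    (I11 I13 : ℝ → ℝ)
    (hI11 : ∀ h ∈ S, DifferentiableAt ℝ I11 h)
    (hI13 : ∀ h ∈ S, DifferentiableAt ℝ I13 h)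
    (hne : ∀ h ∈ S, I11 h ≠ 0)
    (hPF1 : ∀ h ∈ S, I11 h = ((4 / 3) * h + 1 / (3 * a)) * deriv I11 h
        + (b / (9 * a) + 2 / 9) * deriv I13 h)
    (hPF2 : ∀ h ∈ S, I13 h =
        (-(4 * (b + 2 * a) / (5 * (b ^ 2 - 4 * a * c))) * h
            - (b + 2 * a) / (5 * a * (b ^ 2 - 4 * a * c))) * deriv I11 h
        + ((4 / 5) * h
            - (12 * a * c + b ^ 2 + 16 * a * b + 16 * a ^ 2)
              / (15 * a * (b ^ 2 - 4 * a * c))) * deriv I13 h) :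
    ∀ ω : ℝ → ℝ, (∀ h : ℝ, ω h = I13 h / I11 h) →
      ∀ h ∈ S, DifferentiableAt ℝ ω h ∧
        G2 a b c h * deriv ω h =
          -(a2 a b) * (ω h) ^ 2 + (a4 a h - a1 a b c h) * ω h + a3 a b c h :=
  stmt17_general a b c habc S I11 I13 hI11 hI13 hne hPF1 hPF2
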